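/- arXiv:1906.06564 — 4 statements merged into one kernel-verified Lean document; each statement's English description precedes it below -/
import Mathlib

section
/- If γ ∈ ℂ_p satisfies ∑_{n≥0} γ^{p^n}/p^n = 0 and val_p(γ) = 1/(p−1), and γ_ℓ := ∑_{i=0}^ℓ γ^{p^i}/p^i, then val_p(γ_ℓ) ≥ p^{ℓ+1}/(p−1) − (ℓ+1) for every ℓ ≥ 0. -/
/-!
Since the whole series vanishes, `γ_ℓ` is minus the tail `∑_{i > ℓ} γ^(p^i)/p^i`. Because
`‖γ‖^(p-1) = p⁻¹`, from the term `i = 1` on each term has at most `p⁻¹` times the norm of the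
previous one, so by the ultrametric inequality the tail has the norm `‖γ‖^(p^(ℓ+1)) p^(ℓ+1)` of its
first term, and the bound holds with equality.
-/

theorem IsUltrametricDist.norm_tsum_eq_norm_zero_of_norm_succ_le {E : Type*}
    [NormedAddCommGroup E] [IsUltrametricDist E] {f : ℕ → E} {c : ℝ} (hc₀ : 0 ≤ c) (hc₁ : c < 1)
    (hf : ∀ i, ‖f (i + 1)‖ ≤ c * ‖f i‖) (hsum : Summable f) :
    ‖∑' i, f i‖ = ‖f 0‖ := by
  have hle : ∀ i, ‖f i‖ ≤ ‖f 0‖ := by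
    intro i
    induction i with
    | zero => rfl
    | succ i ih => exact (hf i).trans ((mul_le_of_le_one_left (norm_nonneg _) hc₁.le).trans ih)
  have htail : ‖∑' i, f (i + 1)‖ ≤ c * ‖f 0‖ :=
    norm_tsum_le_of_forall_le_of_nonneg (by positivity) fun i ↦
      (hf i).trans (mul_le_mul_of_nonneg_left (hle i) hc₀)
  rw [hsum.tsum_eq_zero_add]
  rcases (norm_nonneg (f 0)).eq_or_lt with h0 | h0
  · have : ‖∑' i, f (i + 1)‖ = 0 := le_antisymm (by simpa [← h0] using htail) (norm_nonneg _)
    rw [norm_eq_zero.mp this, add_zero]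
  · have hlt : ‖∑' i, f (i + 1)‖ < ‖f 0‖ := htail.trans_lt (by nlinarith)
    rw [norm_add_eq_max_of_norm_ne_norm hlt.ne', max_eq_left hlt.le]

section

variable {K : Type*} [NormedDivisionRing K] {p : ℕ}

theorem norm_pow_pow_div_natCast_pow (hnorm : ‖(p : K)‖ = (p : ℝ)⁻¹) (γ : K) (i : ℕ) :
    ‖γ ^ p ^ i / (p : K) ^ i‖ = ‖γ‖ ^ p ^ i * (p : ℝ) ^ i := by
  rw [norm_div, norm_pow, norm_pow, hnorm, inv_pow, div_inv_eq_mul]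

theorem norm_pow_pow_succ_div_natCast_pow_succ_le (hp : 2 ≤ p) (hnorm : ‖(p : K)‖ = (p : ℝ)⁻¹)
    {γ : K} (hγ : ‖γ‖ ^ (p - 1) = (p : ℝ)⁻¹) {i : ℕ} (hi : 1 ≤ i) :
    ‖γ ^ p ^ (i + 1) / (p : K) ^ (i + 1)‖ ≤ (p : ℝ)⁻¹ * ‖γ ^ p ^ i / (p : K) ^ i‖ := by
  have hp0 : (0 : ℝ) < p := by positivity
  have hpow : p ^ (i + 1) = p ^ i + (p - 1) * p ^ i := by
    rw [pow_succ]; zify [show 1 ≤ p by omega]; ring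
  have hpi : 2 ≤ p ^ i := hp.trans (Nat.le_self_pow (by omega) p)
  have hfactor : (p : ℝ) * (p : ℝ)⁻¹ ^ p ^ i ≤ (p : ℝ)⁻¹ := by
    calc (p : ℝ) * (p : ℝ)⁻¹ ^ p ^ i ≤ p * (p : ℝ)⁻¹ ^ 2 := by
          refine mul_le_mul_of_nonneg_left (pow_le_pow_of_le_one (by positivity) ?_ hpi) hp0.le
          exact inv_le_one_of_one_le₀ (by exact_mod_cast (by omega : 1 ≤ p))
      _ = (p : ℝ)⁻¹ := by field_simp
  rw [norm_pow_pow_div_natCast_pow hnorm, norm_pow_pow_div_natCast_pow hnorm, hpow, pow_add,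
    pow_mul, hγ, pow_succ]
  have : 0 ≤ ‖γ‖ ^ p ^ i * (p : ℝ) ^ i := by positivity
  nlinarith

end

theorem Real.pow_sub_one_eq_inv_of_neg_logb_eq {p : ℕ} (hp : 1 < p) {x : ℝ} (hx : 0 ≤ x)
    (h : -Real.logb p x = 1 / ((p : ℝ) - 1)) : x ^ (p - 1) = (p : ℝ)⁻¹ := by
  have hp₁ : (1 : ℝ) < p := by exact_mod_cast hp
  have hx₀ : 0 < x := by
    refine hx.lt_of_ne' fun hx₀ ↦ ?_
    rw [hx₀, Real.logb_zero, neg_zero] at h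
    exact (one_div_pos.mpr (sub_pos.mpr hp₁)).ne h
  have hlog : Real.logb p (x ^ (p - 1)) = -1 := by
    rw [Real.logb_pow, Nat.cast_sub hp.le, Nat.cast_one]
    field_simp [(sub_pos.mpr hp₁).ne'] at h ⊢
    linarith
  rw [← Real.rpow_logb (by positivity) hp₁.ne' (by positivity : 0 < x ^ (p - 1)), hlog,
    Real.rpow_neg_one]

theorem valuation_gamma_ell_lower_bound_general
    (p : ℕ) (hp : p.Prime)
    (K : Type*) [NormedField K] [CompleteSpace K] [IsUltrametricDist K]
    -- the norm extends the p-adic norm: ‖p‖ = p⁻¹, i.e. val_p p = 1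
    (hnorm : ‖(p : K)‖ = (p : ℝ)⁻¹)
    -- the p-adic valuation, normalized so that val_p p = 1
    (val : K → ℝ) (hval : ∀ x : K, val x = -Real.logb p ‖x‖)
    (γ : K)
    (hroot : ∑' n : ℕ, γ ^ (p ^ n) / (p : K) ^ n = 0)
    (hγ : val γ = 1 / ((p : ℝ) - 1))
    (γℓ : ℕ → K)
    (hγℓ : ∀ ℓ : ℕ, γℓ ℓ = ∑ i ∈ Finset.range (ℓ + 1), γ ^ (p ^ i) / (p : K) ^ i) :
    ∀ ℓ : ℕ, val (γℓ ℓ) ≥ (p : ℝ) ^ (ℓ + 1) / ((p : ℝ) - 1) - (ℓ + 1) := by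
  intro ℓ
  set f : ℕ → K := fun i ↦ γ ^ p ^ i / (p : K) ^ i
  have hp₁ : (1 : ℝ) < p := by exact_mod_cast hp.one_lt
  have hγnorm : ‖γ‖ ^ (p - 1) = (p : ℝ)⁻¹ :=
    Real.pow_sub_one_eq_inv_of_neg_logb_eq hp.one_lt (norm_nonneg γ) (hval γ ▸ hγ)
  have hγ₀ : ‖γ‖ ≠ 0 :=
    (pow_ne_zero_iff (Nat.sub_ne_zero_of_lt hp.one_lt)).1 (hγnorm ▸ by positivity)
  have hratio (i : ℕ) : ‖f (i + 1 + (ℓ + 1))‖ ≤ (p : ℝ)⁻¹ * ‖f (i + (ℓ + 1))‖ := by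
    rw [add_right_comm]
    exact norm_pow_pow_succ_div_natCast_pow_succ_le hp.two_le hnorm hγnorm (by omega)
  have hc : (p : ℝ)⁻¹ < 1 := inv_lt_one_of_one_lt₀ hp₁
  have htail : Summable fun i ↦ f (i + (ℓ + 1)) :=
    summable_of_ratio_norm_eventually_le hc (Filter.Eventually.of_forall hratio)
  have hsplit : γℓ ℓ = -∑' i, f (i + (ℓ + 1)) := by
    rw [hγℓ, eq_neg_iff_add_eq_zero,
      ((summable_nat_add_iff (ℓ + 1)).1 htail).sum_add_tsum_nat_add, hroot]
  refine le_of_eq ?_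
  rw [hval, hsplit, norm_neg, IsUltrametricDist.norm_tsum_eq_norm_zero_of_norm_succ_le
    (by positivity) hc hratio htail, zero_add, norm_pow_pow_div_natCast_pow hnorm,
    Real.logb_mul (pow_ne_zero _ hγ₀) (by positivity), Real.logb_pow, Real.logb_pow,
    Real.logb_self_eq_one hp₁, ← neg_neg (Real.logb _ ‖γ‖), ← hval, hγ]
  push_cast
  ring

theorem valuation_gamma_ell_lower_bound
    (p : ℕ) (hp : p.Prime)
    (K : Type*) [NormedField K] [CompleteSpace K] [IsUltrametricDist K]
    [CharZero K]
    -- the norm extends the p-adic norm: ‖p‖ = p⁻¹, i.e. val_p p = 1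
    (hnorm : ‖(p : K)‖ = (p : ℝ)⁻¹)
    -- the p-adic valuation, normalized so that val_p p = 1
    (val : K → ℝ) (hval : ∀ x : K, val x = -Real.logb p ‖x‖)
    (γ : K)
    (hroot : ∑' n : ℕ, γ ^ (p ^ n) / (p : K) ^ n = 0)
    (hγ : val γ = 1 / ((p : ℝ) - 1))
    (γℓ : ℕ → K)
    (hγℓ : ∀ ℓ : ℕ, γℓ ℓ = ∑ i ∈ Finset.range (ℓ + 1), γ ^ (p ^ i) / (p : K) ^ i) :
    ∀ ℓ : ℕ, val (γℓ ℓ) ≥ (p : ℝ) ^ (ℓ + 1) / ((p : ℝ) - 1) - (ℓ + 1) :=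
  valuation_gamma_ell_lower_bound_general p hp K hnorm val hval γ hroot hγ γℓ hγℓ
end

section
/- The formal identity θ̂(t) = exp(∑_{ℓ≥0} γ_ℓ t^{p^ℓ}) holds, where θ̂(t) = ∏_{i≥0} θ(t^{p^i}), θ(t) = E(γt), E is the Artin–Hasse exponential, and γ_ℓ = ∑_{i=0}^ℓ γ^{p^i}/p^i, assuming γ is a root of ∑_{n≥0} t^{p^n}/p^n = 0. -/
/-!
With `L(t) = ∑ γ^(p^n) t^(p^n) / p^n` we have `θ = exp L`, and the substitution `t ↦ t^m` is a
ring endomorphism commuting with `exp`, so `∏_{j<i} θ(t^(p^j)) = exp (∑_{j<i} L(t^(p^j)))`.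
Below degree `p^i` the coefficient of `t^(p^ℓ)` in that sum is `∑_{j+n=ℓ} γ^(p^n)/p^n = γ_ℓ`,
and all other coefficients vanish. The functional equation `exp (f + g) = exp f * exp g` is
checked modulo every `X^N`, where `f` and `g` become nilpotent and `IsNilpotent.exp` applies.
-/

open PowerSeries

variable {K : Type*} [NormedField K] [CharZero K] [CompleteSpace K]

/-- Formal exponential of a power series with zero constant term:
`coeff n (exp f) = ∑_{m ≤ n} coeff n (f^m) / m!`. -/
noncomputable def expOf (f : PowerSeries K) : PowerSeries K :=
  PowerSeries.mk fun n =>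
    ∑ m ∈ Finset.range (n + 1), ((m.factorial : K)⁻¹) * PowerSeries.coeff n (f ^ m)

/-- Substitution `t ↦ t^m` in a formal power series. -/
noncomputable def compPow (f : PowerSeries K) (m : ℕ) : PowerSeries K :=
  PowerSeries.mk fun k => if h : m ∣ k then PowerSeries.coeff (k / m) f else 0

open Classical in
/-- The series `∑_{n ≥ 0} γ^(p^n) t^(p^n) / p^n`, so that `E(γ t) = exp` of it. -/
noncomputable def gammaLog (p : ℕ) (γ : K) : PowerSeries K :=
  PowerSeries.mk fun k =>
    if h : ∃ n : ℕ, k = p ^ n then γ ^ k / (p : K) ^ h.choose else 0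

open Classical in
/-- The series `∑_{ℓ ≥ 0} γ_ℓ t^(p^ℓ)` where `γ_ℓ = ∑_{i=0}^ℓ γ^(p^i)/p^i`. -/
noncomputable def gammaEllSeries (p : ℕ) (γ : K) : PowerSeries K :=
  PowerSeries.mk fun k =>
    if h : ∃ ℓ : ℕ, k = p ^ ℓ then
      ∑ i ∈ Finset.range (h.choose + 1), γ ^ (p ^ i) / (p : K) ^ i
    else 0

open Finset

section Truncation

variable {R : Type*} [CommRing R]

theorem mk_span_X_pow_eq_iff {N : ℕ} {f g : R⟦X⟧} :
    Ideal.Quotient.mk (Ideal.span {X ^ N}) f = Ideal.Quotient.mk (Ideal.span {X ^ N}) g ↔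
      ∀ k < N, coeff k f = coeff k g := by
  simp only [Ideal.Quotient.eq, Ideal.mem_span_singleton, X_pow_dvd_iff, map_sub, sub_eq_zero]

theorem isNilpotent_mk_span_X_pow {N : ℕ} {f : R⟦X⟧} (hf : constantCoeff f = 0) :
    IsNilpotent (Ideal.Quotient.mk (Ideal.span {X ^ N}) f) :=
  ⟨N, by
    rw [← map_pow, Ideal.Quotient.eq_zero_iff_mem, Ideal.mem_span_singleton]
    exact pow_dvd_pow_of_dvd (X_dvd_iff.mpr hf) N⟩

theorem eq_of_forall_mk_span_X_pow_eq {f g : R⟦X⟧}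
    (h : ∀ N, Ideal.Quotient.mk (Ideal.span {X ^ N}) f = Ideal.Quotient.mk (Ideal.span {X ^ N}) g) :
    f = g :=
  ext fun n => mk_span_X_pow_eq_iff.mp (h (n + 1)) n n.lt_succ_self

end Truncation

section FormalExp

variable {K : Type*} [NormedField K]

theorem coeff_expOf_eq_sum_range {f : K⟦X⟧} (hf : constantCoeff f = 0) {k N : ℕ} (hk : k < N) :
    coeff k (expOf f) = ∑ m ∈ range N, (m.factorial : K)⁻¹ * coeff k (f ^ m) := by
  rw [expOf, coeff_mk]
  refine sum_subset (range_subset_range.mpr hk) fun m _ hm => ?_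
  rw [X_pow_dvd_iff.mp (pow_dvd_pow_of_dvd (X_dvd_iff.mpr hf) m) k (by simpa using hm), mul_zero]

theorem coeff_compPow (f : K⟦X⟧) (m k : ℕ) :
    coeff k (compPow f m) = if m ∣ k then coeff (k / m) f else 0 := by
  rw [compPow, coeff_mk, dite_eq_ite]

theorem compPow_eq_expand (f : K⟦X⟧) {m : ℕ} (hm : m ≠ 0) : compPow f m = expand m hm f := by
  ext k
  rw [coeff_compPow, coeff_expand]

theorem constantCoeff_compPow {f : K⟦X⟧} (hf : constantCoeff f = 0) {m : ℕ} (hm : m ≠ 0) :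
    constantCoeff (compPow f m) = 0 := by
  rw [compPow_eq_expand f hm, constantCoeff_expand, hf]

theorem compPow_expOf {f : K⟦X⟧} (hf : constantCoeff f = 0) {m : ℕ} (hm : m ≠ 0) :
    compPow (expOf f) m = expOf (compPow f m) := by
  ext k
  rw [coeff_compPow, coeff_expOf_eq_sum_range (constantCoeff_compPow hf hm) k.lt_succ_self]
  simp only [compPow_eq_expand f hm, ← map_pow, coeff_expand]
  split_ifs
  · exact coeff_expOf_eq_sum_range hf (Nat.lt_succ_of_le (Nat.div_le_self k m))
  · simp

theorem coeff_expOf_congr {f g : K⟦X⟧} {d : ℕ} (h : ∀ k ≤ d, coeff k f = coeff k g) :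
    coeff d (expOf f) = coeff d (expOf g) := by
  have hmk : Ideal.Quotient.mk (Ideal.span {X ^ (d + 1)}) f =
      Ideal.Quotient.mk (Ideal.span {X ^ (d + 1)}) g :=
    mk_span_X_pow_eq_iff.mpr fun k hk => h k (Nat.le_of_lt_succ hk)
  simp only [expOf, coeff_mk]
  refine sum_congr rfl fun m _ => congrArg _ ?_
  exact mk_span_X_pow_eq_iff.mp (by rw [map_pow, map_pow, hmk]) d d.lt_succ_self

variable [CharZero K]

theorem mk_expOf {f : K⟦X⟧} (hf : constantCoeff f = 0) (N : ℕ) :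
    Ideal.Quotient.mk (Ideal.span {X ^ N}) (expOf f) =
      IsNilpotent.exp (Ideal.Quotient.mk (Ideal.span {X ^ N}) f) := by
  obtain ⟨n, hn⟩ := isNilpotent_mk_span_X_pow (N := N) hf
  rw [IsNilpotent.exp_eq_sum (pow_eq_zero_of_le (le_max_left n N) hn)]
  simp only [← map_pow, ← map_rat_smul (Ideal.Quotient.mk (Ideal.span {X ^ N})), ← map_sum]
  refine mk_span_X_pow_eq_iff.mpr fun k hk => ?_
  rw [coeff_expOf_eq_sum_range hf (hk.trans_le (le_max_right n N)), map_sum]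
  simp [Rat.smul_def]

theorem expOf_zero : expOf (0 : K⟦X⟧) = 1 :=
  eq_of_forall_mk_span_X_pow_eq fun N => by
    rw [mk_expOf (map_zero _), map_zero, IsNilpotent.exp_zero, map_one]

theorem expOf_add {f g : K⟦X⟧} (hf : constantCoeff f = 0) (hg : constantCoeff g = 0) :
    expOf (f + g) = expOf f * expOf g :=
  eq_of_forall_mk_span_X_pow_eq fun N => by
    rw [mk_expOf (by rw [map_add, hf, hg, add_zero]), map_add, map_mul, mk_expOf hf, mk_expOf hg,
      IsNilpotent.exp_add_of_commute (Commute.all _ _) (isNilpotent_mk_span_X_pow hf)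
        (isNilpotent_mk_span_X_pow hg)]

theorem expOf_sum {ι : Type*} (s : Finset ι) {f : ι → K⟦X⟧}
    (hf : ∀ i ∈ s, constantCoeff (f i) = 0) :
    expOf (∑ i ∈ s, f i) = ∏ i ∈ s, expOf (f i) := by
  induction s using Finset.cons_induction with
  | empty => rw [sum_empty, prod_empty, expOf_zero]
  | cons a s _ ih =>
    have hs : constantCoeff (∑ i ∈ s, f i) = 0 := by
      rw [map_sum]
      exact sum_eq_zero fun i hi => hf i (mem_cons_of_mem hi)
    rw [sum_cons, prod_cons, expOf_add (hf a (mem_cons_self a s)) hs,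
      ih fun i hi => hf i (mem_cons_of_mem hi)]

end FormalExp

section GammaSeries

variable {K : Type*} [NormedField K] (γ : K) {p : ℕ}

theorem coeff_gammaLog_pow (hp : 1 < p) (n : ℕ) :
    coeff (p ^ n) (gammaLog p γ) = γ ^ p ^ n / (p : K) ^ n := by
  have hex : ∃ m, p ^ n = p ^ m := ⟨n, rfl⟩
  rw [gammaLog, coeff_mk, dif_pos hex, Nat.pow_right_injective hp hex.choose_spec.symm]

theorem coeff_gammaLog_of_not_pow {k : ℕ} (hk : ¬ ∃ n, k = p ^ n) :
    coeff k (gammaLog p γ) = 0 := by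
  rw [gammaLog, coeff_mk, dif_neg hk]

theorem constantCoeff_gammaLog (hp : p ≠ 0) : constantCoeff (gammaLog p γ) = 0 := by
  rw [← coeff_zero_eq_constantCoeff_apply, coeff_gammaLog_of_not_pow]
  rintro ⟨n, hn⟩
  exact pow_ne_zero n hp hn.symm

theorem coeff_gammaEllSeries_pow (hp : 1 < p) (ℓ : ℕ) :
    coeff (p ^ ℓ) (gammaEllSeries p γ) = ∑ i ∈ range (ℓ + 1), γ ^ p ^ i / (p : K) ^ i := by
  have hex : ∃ m, p ^ ℓ = p ^ m := ⟨ℓ, rfl⟩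
  rw [gammaEllSeries, coeff_mk, dif_pos hex, Nat.pow_right_injective hp hex.choose_spec.symm]

theorem coeff_gammaEllSeries_of_not_pow {k : ℕ} (hk : ¬ ∃ ℓ, k = p ^ ℓ) :
    coeff k (gammaEllSeries p γ) = 0 := by
  rw [gammaEllSeries, coeff_mk, dif_neg hk]

theorem coeff_compPow_gammaLog_pow (hp : 1 < p) (j ℓ : ℕ) :
    coeff (p ^ ℓ) (compPow (gammaLog p γ) (p ^ j)) =
      if j ≤ ℓ then γ ^ p ^ (ℓ - j) / (p : K) ^ (ℓ - j) else 0 := by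
  rw [coeff_compPow]
  by_cases hjℓ : j ≤ ℓ
  · rw [if_pos (pow_dvd_pow p hjℓ), if_pos hjℓ, Nat.pow_div hjℓ (by omega),
      coeff_gammaLog_pow γ hp]
  · rw [if_neg (mt (Nat.pow_dvd_pow_iff_le_right hp).mp hjℓ), if_neg hjℓ]

theorem coeff_compPow_gammaLog_of_not_pow (j : ℕ) {k : ℕ} (hk : ¬ ∃ n, k = p ^ n) :
    coeff k (compPow (gammaLog p γ) (p ^ j)) = 0 := by
  rw [coeff_compPow]
  split_ifs with hdvd
  · refine coeff_gammaLog_of_not_pow γ fun ⟨n, hn⟩ => hk ⟨j + n, ?_⟩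
    rw [pow_add, ← hn, Nat.mul_div_cancel' hdvd]
  · rfl

theorem coeff_sum_compPow_gammaLog (hp : 1 < p) {i k : ℕ} (hk : k < p ^ i) :
    coeff k (∑ j ∈ range i, compPow (gammaLog p γ) (p ^ j)) = coeff k (gammaEllSeries p γ) := by
  rw [map_sum]
  by_cases hpow : ∃ ℓ, k = p ^ ℓ
  · obtain ⟨ℓ, rfl⟩ := hpow
    have hℓi : ℓ + 1 ≤ i := (Nat.pow_lt_pow_iff_right hp).mp hk
    rw [coeff_gammaEllSeries_pow γ hp, ← sum_subset (range_subset_range.mpr hℓi) fun j _ hj => ?_]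
    · conv_rhs => rw [← sum_range_reflect]
      refine sum_congr rfl fun j hj => ?_
      rw [coeff_compPow_gammaLog_pow γ hp, if_pos (Nat.le_of_lt_succ (mem_range.mp hj)),
        Nat.add_sub_cancel]
    · rw [coeff_compPow_gammaLog_pow γ hp, if_neg (by simpa using hj)]
  · rw [coeff_gammaEllSeries_of_not_pow γ hpow]
    exact sum_eq_zero fun j _ => coeff_compPow_gammaLog_of_not_pow γ j hpow

end GammaSeries

/-- The infinite product `θ̂` is read coefficientwise: its coefficient of degree `d` is that of
any partial product over `j < i` with `d < p ^ i`, as `θ(t^(p^j)) ≡ 1 mod t^(p^j)`. -/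
theorem thetaHat_eq_exp_gammaEll_general
    (p : ℕ) (hp : p.Prime) (γ : K)
    -- θ(t) := E(γ t), the Artin–Hasse exponential evaluated at γ t
    (θ : PowerSeries K) (hθ : θ = expOf (gammaLog p γ)) :
    ∀ d i : ℕ, d < p ^ i →
      PowerSeries.coeff d (∏ j ∈ Finset.range i, compPow θ (p ^ j)) =
        PowerSeries.coeff d (expOf (gammaEllSeries p γ)) := by
  intro d i hdi
  subst hθ
  have hL := constantCoeff_gammaLog γ hp.ne_zero
  have hpj : ∀ j, p ^ j ≠ 0 := fun j => pow_ne_zero j hp.ne_zero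
  rw [prod_congr rfl fun j _ => compPow_expOf hL (hpj j),
    ← expOf_sum _ fun j _ => constantCoeff_compPow hL (hpj j)]
  exact coeff_expOf_congr fun k hk => coeff_sum_compPow_gammaLog γ hp.one_lt (hk.trans_lt hdi)

/-- `θ̂(t) = ∏_{i ≥ 0} θ(t^(p^i)) = exp (∑_{ℓ ≥ 0} γ_ℓ t^(p^ℓ))`, stated
coefficientwise: in each degree `d` the (stabilized) partial products of the
left-hand side agree with the right-hand side. -/
theorem thetaHat_eq_exp_gammaEll
    (p : ℕ) (hp : p.Prime) (γ : K)
    (hroot : ∑' n : ℕ, γ ^ (p ^ n) / (p : K) ^ n = 0)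
    -- θ(t) := E(γ t), the Artin–Hasse exponential evaluated at γ t
    (θ : PowerSeries K) (hθ : θ = expOf (gammaLog p γ)) :
    ∀ d i : ℕ, d < p ^ i →
      PowerSeries.coeff d (∏ j ∈ Finset.range i, compPow θ (p ^ j)) =
        PowerSeries.coeff d (expOf (gammaEllSeries p γ)) :=
  thetaHat_eq_exp_gammaEll_general p hp γ θ hθ
end

section
/- Let C = A[η_1,…,η_N] with A = k[z_1,…,z_N], Δ = c·∑_i ∂_{z_i}∂_{η_i} for a scalar c, and define Ψ on C^{−m} by Ψ(ξ(z)·η_{i_1}⋯η_{i_m}) = q^m · T_q(ξ(z)·∏_{j∉{i_1,…,i_m}} z_j) / (∏_{j∉{i_1,…,i_m}} z_j) · η_{i_1}⋯η_{i_m}. Then Ψ is a cochain map: Ψ∘Δ = Δ∘Ψ. -/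
/-!
STATEMENT 15: Let `C = A[η_1,…,η_N]` with `A = k[[z_1,…,z_N]]`,
`Δ = c · ∑_i ∂_{z_i} ∂_{η_i}` for a scalar `c`, and define `Ψ` on `C^{−m}` by
`Ψ(ξ(z)·η_{i_1}⋯η_{i_m})
  = q^m · T_q(ξ(z)·∏_{j∉{i_1,…,i_m}} z_j) / (∏_{j∉{i_1,…,i_m}} z_j)
    · η_{i_1}⋯η_{i_m}`.
Then `Ψ` is a cochain map: `Ψ ∘ Δ = Δ ∘ Ψ`.

`C` is modeled as `Finset (Fin N) → A` (coefficients of the monomials `η_S`);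
the division by `∏_{j ∉ S} z_j` is realized as the coefficient shift
`w ↦ w + 𝟙_{Sᶜ}` (which is exactly division on the image of
`g ↦ T_q((∏_{j∉S} z_j)·g)`, where every surviving monomial is divisible by
`∏_{j∉S} z_j`).
-/

variable {k : Type*} [Field k] [CharZero k] {N : ℕ}

/-- `C = A[η]`, as functions from subsets (η-monomials) to `A = k[[z]]`. -/
abbrev SuperA (k : Type*) [Field k] (N : ℕ) := Finset (Fin N) → MvPowerSeries (Fin N) k

/-- Koszul sign `(-1)^(#{j ∈ S : j < i})`. -/
def etaSign (S : Finset (Fin N)) (i : Fin N) : ℤ := (-1 : ℤ) ^ ((S.filter (· < i)).card)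

/-- The partial derivative `∂/∂z_i` on power series, coefficientwise. -/
noncomputable def zDeriv (i : Fin N) (f : MvPowerSeries (Fin N) k) :
    MvPowerSeries (Fin N) k :=
  fun w => ((w i + 1 : ℕ) : k) * f (w + Finsupp.single i 1)

/-- The operator `Δ = c · ∑_i ∂_{z_i} ∂_{η_i}` on `C`. -/
noncomputable def DeltaC (c : k) (f : SuperA k N) : SuperA k N := fun S =>
  c • ∑ i ∈ Sᶜ, etaSign S i • zDeriv i (f (insert i S))

/-- The Dwork shift operator `T_q`. -/
noncomputable def Tq (q : ℕ) (f : MvPowerSeries (Fin N) k) : MvPowerSeries (Fin N) k :=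
  fun w => f (q • w)

/-- The indicator multi-index `𝟙_{Sᶜ} = ∑_{j ∉ S} e_j`. -/
noncomputable def indC (S : Finset (Fin N)) : Fin N →₀ ℕ :=
  ∑ j ∈ Sᶜ, Finsupp.single j 1

/-- Division by `∏_{j ∉ S} z_j`, as a coefficient shift. -/
noncomputable def divProdC (S : Finset (Fin N)) (g : MvPowerSeries (Fin N) k) :
    MvPowerSeries (Fin N) k :=
  fun w => g (w + indC S)

/-- The operator `Ψ`:
`Ψ(ξ·η_S) = q^{|S|} · T_q(ξ·∏_{j∉S} z_j)/(∏_{j∉S} z_j) · η_S`. -/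
noncomputable def PsiC (q : ℕ) (f : SuperA k N) : SuperA k N := fun S =>
  ((q : k) ^ S.card) • divProdC S (Tq q ((∏ j ∈ Sᶜ, MvPowerSeries.X j) * f S))

/-! Every coefficient of `Ψ f` is a single rescaled coefficient of `f`: the coefficient of `Ψ f`
at `(S, w)` is `q^{|S|}` times the coefficient of `f` at `(S, v)` with
`v + 𝟙_{Sᶜ} = q • (w + 𝟙_{Sᶜ})`. Passing from `S` to `insert i S` and from `w` to `w + e_i`
shifts `v` by `e_i` while `v_i + 1 = q (w_i + 1)`, so the factor `q` picked up by `∂_{z_i}` on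
one side matches the factor `q^{|S|+1} / q^{|S|}` on the other. -/

theorem MvPowerSeries.prod_X_eq_monomial {σ R : Type*} [CommSemiring R] (T : Finset σ) :
    ∏ j ∈ T, (X j : MvPowerSeries σ R) = monomial (∑ j ∈ T, Finsupp.single j 1) 1 := by
  classical
  induction T using Finset.induction_on with
  | empty => simp [monomial_zero_one]
  | insert j T hj ih =>
    rw [Finset.prod_insert hj, Finset.sum_insert hj, ih, X_def, monomial_mul_monomial, one_mul]

theorem indC_apply (S : Finset (Fin N)) (j : Fin N) : indC S j = if j ∈ S then 0 else 1 := by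
  classical
  simp [indC, Finsupp.finsetSum_apply, Finsupp.single_apply]

noncomputable def psiIndex (q : ℕ) (S : Finset (Fin N)) (w : Fin N →₀ ℕ) : Fin N →₀ ℕ :=
  q • w + (q - 1) • indC S

section

variable {q : ℕ} {S : Finset (Fin N)} {w : Fin N →₀ ℕ} {i : Fin N}

theorem smul_add_indC_eq (hq : 0 < q) : q • (w + indC S) = indC S + psiIndex q S w := by
  obtain ⟨p, rfl⟩ := Nat.exists_eq_add_of_lt hq
  ext j
  simp only [psiIndex, Finsupp.coe_add, Finsupp.coe_smul, Pi.add_apply, Pi.smul_apply,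
    smul_eq_mul]
  rw [Nat.add_sub_cancel]
  ring

theorem psiIndex_insert (hq : 0 < q) (hi : i ∉ S) :
    psiIndex q (insert i S) (w + Finsupp.single i 1) = psiIndex q S w + Finsupp.single i 1 := by
  ext j
  simp only [psiIndex, Finsupp.coe_add, Finsupp.coe_smul, Pi.add_apply, Pi.smul_apply,
    smul_eq_mul, indC_apply, Finset.mem_insert, Finsupp.single_apply]
  by_cases hij : i = j
  · subst hij
    obtain ⟨p, rfl⟩ := Nat.exists_eq_add_of_lt hq
    simp only [if_true, hi, if_false, true_or, Nat.add_sub_cancel]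
    ring
  · simp [hij, Ne.symm hij]

theorem psiIndex_apply_add_one (hq : 0 < q) (hi : i ∉ S) :
    psiIndex q S w i + 1 = q * (w i + 1) := by
  simp only [psiIndex, Finsupp.coe_add, Finsupp.coe_smul, Pi.add_apply, Pi.smul_apply,
    smul_eq_mul, indC_apply, hi, if_false]
  obtain ⟨p, rfl⟩ := Nat.exists_eq_add_of_lt hq
  rw [Nat.add_sub_cancel]
  ring

end

theorem PsiC_apply {K : Type*} [Field K] {q : ℕ} (hq : 0 < q) (f : SuperA K N)
    (S : Finset (Fin N)) (w : Fin N →₀ ℕ) :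
    PsiC q f S w = (q : K) ^ S.card * f S (psiIndex q S w) := by
  change (q : K) ^ S.card * MvPowerSeries.coeff (q • (w + indC S))
    ((∏ j ∈ Sᶜ, MvPowerSeries.X j : MvPowerSeries (Fin N) K) * f S) = _
  rw [smul_add_indC_eq hq, MvPowerSeries.prod_X_eq_monomial]
  exact congrArg _ (MvPowerSeries.coeff_add_monomial_mul _ _ _ 1 |>.trans (one_mul _))

theorem DeltaC_apply {K : Type*} [Field K] (c : K) (f : SuperA K N) (S : Finset (Fin N))
    (w : Fin N →₀ ℕ) :
    DeltaC c f S w = c * ∑ i ∈ Sᶜ, (etaSign S i : K) *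
      (((w i + 1 : ℕ) : K) * f (insert i S) (w + Finsupp.single i 1)) := by
  simp only [DeltaC, ← MvPowerSeries.coeff_apply, MvPowerSeries.coeff_smul, map_sum,
    ← zsmul_eq_mul]
  rfl

/-- `Ψ` is a cochain map: `Ψ ∘ Δ = Δ ∘ Ψ`. -/
theorem Psi_cochain_map (q : ℕ) (hq : 0 < q) (c : k) (f : SuperA k N) :
    PsiC q (DeltaC c f) = DeltaC c (PsiC q f) := by
  funext S w
  simp only [PsiC_apply hq, DeltaC_apply, Finset.mul_sum]
  refine Finset.sum_congr rfl fun i hi => ?_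
  have hi : i ∉ S := Finset.mem_compl.mp hi
  rw [psiIndex_insert hq hi, Finset.card_insert_of_notMem hi, psiIndex_apply_add_one hq hi]
  push_cast
  ring
end

section
/- Let C = A[η_1,…,η_N] and Ω^• the Koszul/de Rham-type complex with Ω^s = ⊕_{i_1<⋯<i_s} A·dz_{i_1}∧⋯∧dz_{i_s}, with differential D(w) = c(dw + dS∧w) for a fixed S ∈ A and scalar c. Let K_S = c·∑_i (∂S/∂z_i + ∂/∂z_i)∂/∂η_i on C. Define J : Ω^s → C^{s−N} by J(ξ·dz_{i_1}⋯dz_{i_s}) = (−1)^{i_1+⋯+i_s−s} ξ·(product of all η_j with j ∉ {i_1,…,i_s}, in increasing order). Then J∘D = K_S∘J (J is a degree-shifting cochain isomorphism, the odd Fourier transform). -/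
/-!
STATEMENT 18: Let `C = A[η_1,…,η_N]` (`A = k[z_1,…,z_N]`, `char k = 0`) and
`Ω^•` the Koszul/de Rham-type complex with
`Ω^s = ⊕_{i_1<⋯<i_s} A·dz_{i_1}∧⋯∧dz_{i_s}` and differential
`D(w) = c(dw + dS ∧ w)` for a fixed `S ∈ A` and nonzero scalar `c`.  Let
`K_S = c·∑_i (∂S/∂z_i + ∂/∂z_i) ∂/∂η_i` on `C`.  Define `J : Ω^s → C^{s−N}`
by `J(ξ·dz_{i_1}⋯dz_{i_s}) = (−1)^{i_1+⋯+i_s−s} ξ · ∏_{j ∉ {i_1,…,i_s}} η_j`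
(in increasing order).  Then `J ∘ D = K_S ∘ J` (the odd Fourier transform).

Both `Ω^•` and `C` are modeled as `Finset (Fin N) → A`, recording the
coefficient of `dz_T` (resp. `η_T`); with 0-based indices the sign
`(−1)^{i_1+⋯+i_s−s}` becomes `(−1)^{∑_{i ∈ T} i}`.
-/

variable {k : Type*} [Field k] [CharZero k] {N : ℕ}

abbrev PolyA (k : Type*) [Field k] (N : ℕ) := MvPolynomial (Fin N) k

/-- The exterior derivative `d` on `Ω^•`. -/
noncomputable def extD (ω : Finset (Fin N) → PolyA k N) :
    Finset (Fin N) → PolyA k N := fun T =>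
  ∑ i ∈ T, etaSign (T.erase i) i • MvPolynomial.pderiv i (ω (T.erase i))

/-- Wedging with `dS = ∑_i (∂S/∂z_i) dz_i`. -/
noncomputable def wedgeDS (S : PolyA k N) (ω : Finset (Fin N) → PolyA k N) :
    Finset (Fin N) → PolyA k N := fun T =>
  ∑ i ∈ T, etaSign (T.erase i) i • (MvPolynomial.pderiv i S * ω (T.erase i))

/-- The twisted de Rham differential `D(w) = c (dw + dS ∧ w)`. -/
noncomputable def twistedD (c : k) (S : PolyA k N) (ω : Finset (Fin N) → PolyA k N) :
    Finset (Fin N) → PolyA k N := fun T =>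
  c • (extD ω T + wedgeDS S ω T)

/-- The operator `K_S = c · ∑_i (∂S/∂z_i + ∂/∂z_i) ∂/∂η_i` on `C`. -/
noncomputable def KSop (c : k) (S : PolyA k N) (f : Finset (Fin N) → PolyA k N) :
    Finset (Fin N) → PolyA k N := fun T =>
  c • ∑ i ∈ Tᶜ, etaSign T i •
    (MvPolynomial.pderiv i (f (insert i T)) +
      MvPolynomial.pderiv i S * f (insert i T))

/-- The odd Fourier transform `J`, sending the coefficient of `dz_T` to
`(−1)^{∑_{i∈T} i}` times the coefficient of the complementary `η`-monomial. -/
noncomputable def oddFourier (ω : Finset (Fin N) → PolyA k N) :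
    Finset (Fin N) → PolyA k N := fun T =>
  ((-1 : ℤ) ^ (∑ i ∈ Tᶜ, (i : ℕ))) • ω Tᶜ

lemma card_filter_lt_add (T : Finset (Fin N)) (i : Fin N) :
    (T.filter (· < i)).card + (Tᶜ.filter (· < i)).card = (i : ℕ) := by
  classical
  have hdisj : Disjoint (T.filter (· < i)) (Tᶜ.filter (· < i)) :=
    (Finset.disjoint_filter_filter (disjoint_compl_right))
  rw [← Finset.card_union_of_disjoint hdisj, ← Finset.filter_union,
    Finset.union_compl]
  have : Finset.univ.filter (· < i) = Finset.Iio i := by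
    ext j; simp [Finset.mem_Iio]
  rw [this, Fin.card_Iio]

lemma etaSign_mul (T : Finset (Fin N)) (i : Fin N) (hi : i ∈ Tᶜ) :
    etaSign T i * etaSign (Tᶜ.erase i) i = (-1 : ℤ) ^ (i : ℕ) := by
  classical
  have he : (Tᶜ.erase i).filter (· < i) = Tᶜ.filter (· < i) := by
    ext j
    simp only [Finset.mem_filter, Finset.mem_erase]
    constructor
    · rintro ⟨⟨_, h⟩, h2⟩; exact ⟨h, h2⟩
    · rintro ⟨h, h2⟩; exact ⟨⟨fun hji => absurd (hji ▸ h2) (lt_irrefl i), h⟩, h2⟩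
  rw [etaSign, etaSign, he, ← pow_add, card_filter_lt_add]

/-- `J ∘ D = K_S ∘ J`. -/
theorem oddFourier_intertwines (c : k) (hc : c ≠ 0) (S : PolyA k N)
    (ω : Finset (Fin N) → PolyA k N) :
    oddFourier (twistedD c S ω) = KSop c S (oddFourier ω) := by
  classical
  funext T
  simp only [oddFourier, twistedD, KSop, extD, wedgeDS]
  rw [smul_comm ((-1:ℤ)^(∑ i ∈ Tᶜ, (i:ℕ))) c]
  congr 1
  rw [← Finset.sum_add_distrib, Finset.smul_sum]
  refine Finset.sum_congr rfl fun i hi => ?_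
  have hins : (insert i T)ᶜ = Tᶜ.erase i := by
    rw [Finset.compl_insert]
  rw [hins]
  have hsum : (∑ j ∈ Tᶜ, (j:ℕ)) = (i:ℕ) + ∑ j ∈ Tᶜ.erase i, (j:ℕ) :=
    (Finset.add_sum_erase _ _ hi).symm
  rw [map_zsmul, mul_smul_comm]
  simp only [← smul_add, smul_smul]
  rw [hsum, pow_add]
  congr 1
  have := etaSign_mul T i hi
  have hsq : etaSign (Tᶜ.erase i) i * etaSign (Tᶜ.erase i) i = 1 := by
    simp [etaSign, ← pow_add, ← two_mul, pow_mul]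
  calc (-1:ℤ)^(i:ℕ) * (-1:ℤ)^(∑ j ∈ Tᶜ.erase i, (j:ℕ)) * etaSign (Tᶜ.erase i) i
      = (etaSign T i * etaSign (Tᶜ.erase i) i) * (-1:ℤ)^(∑ j ∈ Tᶜ.erase i, (j:ℕ)) * etaSign (Tᶜ.erase i) i := by rw [this]
    _ = etaSign T i * ((-1:ℤ)^(∑ j ∈ Tᶜ.erase i, (j:ℕ))) * (etaSign (Tᶜ.erase i) i * etaSign (Tᶜ.erase i) i) := by ring
    _ = etaSign T i * (-1:ℤ)^(∑ j ∈ Tᶜ.erase i, (j:ℕ)) := by rw [hsq, mul_one]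
end
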